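/- Hölder 1/3 cusp regularity of the blow-up profile W̄: Let W̄ : ℝ³ → ℝ be defined by W̄(y) = B(y̌)^{−1/2} W₁d( B(y̌)^{3/2} y₁ ), where y̌ = (y₂,y₃) and B(y̌) = 1/(1 + y₂² + y₃²). Then there exists a constant C > 0 such that for all y, y′ ∈ ℝ³: |W̄(y) − W̄(y′)| ≤ C ( |y₁ − y₁′|^{1/3} + |y̌ − y̌′| ). In particular, W̄ is uniformly Hölder continuous of exponent 1/3 in the y₁-variable (uniformly in y̌) and uniformly Lipschitz in the transverse variables y̌ = (y₂,y₃). -/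
import Mathlib


noncomputable section

/-- Points of self-similar space `ℝ³`. -/
abbrev V3 : Type := Fin 3 → ℝ

/-- The stable self-similar profile of the 1D Burgers equation. -/
def W1d (y : ℝ) : ℝ :=
  (-y / 2 + Real.sqrt (1 / 27 + y ^ 2 / 4)) ^ ((1 : ℝ) / 3)
    - (y / 2 + Real.sqrt (1 / 27 + y ^ 2 / 4)) ^ ((1 : ℝ) / 3)

/-- `B(y̌) = 1/(1 + y₂² + y₃²)`. -/
def Bf (y : V3) : ℝ := 1 / (1 + y 1 ^ 2 + y 2 ^ 2)

/-- The explicit 3D self-similar Burgers profile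
`W̄(y) = B(y̌)^{−1/2} W₁d(B(y̌)^{3/2} y₁)`. -/
def Wbar (y : V3) : ℝ :=
  Bf y ^ (-(1 : ℝ) / 2) * W1d (Bf y ^ ((3 : ℝ) / 2) * y 0)

lemma W1d_cubic (y : ℝ) : W1d y ^ 3 + W1d y + y = 0 := by
  have hs0 : (0:ℝ) ≤ 1 / 27 + y ^ 2 / 4 := by positivity
  set s := Real.sqrt (1 / 27 + y ^ 2 / 4) with hs_def
  have hs2 : s ^ 2 = 1 / 27 + y ^ 2 / 4 := Real.sq_sqrt hs0
  have hsn : 0 ≤ s := Real.sqrt_nonneg _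
  have ha : 0 < -y / 2 + s := by nlinarith [hs2, hsn, sq_nonneg (y/2 - s), sq_nonneg (y/2 + s)]
  have hb : 0 < y / 2 + s := by nlinarith [hs2, hsn, sq_nonneg (y/2 - s), sq_nonneg (y/2 + s)]
  set A := (-y / 2 + s) ^ ((1 : ℝ) / 3) with hA_def
  set B := (y / 2 + s) ^ ((1 : ℝ) / 3) with hB_def
  have hA3 : A ^ (3:ℕ) = -y / 2 + s := by
    rw [hA_def, ← Real.rpow_natCast (_ ^ ((1:ℝ)/3)) 3, ← Real.rpow_mul ha.le]
    norm_num
  have hB3 : B ^ (3:ℕ) = y / 2 + s := by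
    rw [hB_def, ← Real.rpow_natCast (_ ^ ((1:ℝ)/3)) 3, ← Real.rpow_mul hb.le]
    norm_num
  have hab : (-y / 2 + s) * (y / 2 + s) = 1 / 27 := by linear_combination hs2
  have hAB : A * B = 1 / 3 := by
    rw [hA_def, hB_def, ← Real.mul_rpow ha.le hb.le, hab,
      show (1:ℝ)/27 = (1/3) ^ (3:ℕ) by norm_num, ← Real.rpow_natCast ((1:ℝ)/3) 3,
      ← Real.rpow_mul (by norm_num : (0:ℝ) ≤ 1/3)]
    norm_num
  show (A - B) ^ 3 + (A - B) + y = 0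
  linear_combination hA3 - hB3 - 3 * (A - B) * hAB

lemma Wbar_cubic (y : V3) :
    Wbar y ^ 3 + (1 + y 1 ^ 2 + y 2 ^ 2) * Wbar y + y 0 = 0 := by
  have hB : 0 < Bf y := by rw [Bf]; positivity
  have hBinv : (Bf y)⁻¹ = 1 + y 1 ^ 2 + y 2 ^ 2 := by rw [Bf, one_div, inv_inv]
  set B := Bf y with hBdef
  set u := W1d (B ^ ((3:ℝ)/2) * y 0) with hu_def
  have hu : u ^ 3 + u + B ^ ((3:ℝ)/2) * y 0 = 0 := W1d_cubic _
  have h2 : (B ^ (-(1:ℝ)/2)) ^ (3:ℕ) = B ^ (-(3:ℝ)/2) := by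
    rw [← Real.rpow_natCast (B ^ (-(1:ℝ)/2)) 3, ← Real.rpow_mul hB.le]
    norm_num
  have h1 : B ^ (-(3:ℝ)/2) * B ^ ((3:ℝ)/2) = 1 := by
    rw [← Real.rpow_add hB]; norm_num
  have h3 : B ^ (-(3:ℝ)/2) = (1 + y 1 ^ 2 + y 2 ^ 2) * B ^ (-(1:ℝ)/2) := by
    rw [show (-(3:ℝ)/2) = (-1) + (-(1:ℝ)/2) by norm_num, Real.rpow_add hB,
      Real.rpow_neg_one, hBinv]
  show (B ^ (-(1:ℝ)/2) * u) ^ 3 + (1 + y 1 ^ 2 + y 2 ^ 2) * (B ^ (-(1:ℝ)/2) * u) + y 0 = 0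
  linear_combination (B ^ (-(3:ℝ)/2)) * hu + u ^ 3 * h2 - u * h3 - y 0 * h1

lemma estA (w w' p q q' : ℝ) (hp : 0 ≤ p)
    (hw : w ^ 3 + p * w + q = 0) (hw' : w' ^ 3 + p * w' + q' = 0) :
    |w - w'| ≤ 2 * |q - q'| ^ ((1:ℝ)/3) := by
  have key : (w - w') * ((w^2 + w*w' + w'^2) + p) = q' - q := by
    linear_combination hw - hw'
  have hSp : 0 ≤ (w^2 + w*w' + w'^2) + p := by nlinarith [sq_nonneg (w+w'), sq_nonneg (w-w')]
  have hd2 : (w - w')^2 ≤ 4 * ((w^2 + w*w' + w'^2) + p) := by nlinarith [sq_nonneg (w+w')]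
  have habs : |w - w'| * ((w^2 + w*w' + w'^2) + p) = |q - q'| := by
    rw [← abs_of_nonneg hSp, ← abs_mul, key, abs_sub_comm]
  have h1 : |w - w'| ^ 3 ≤ 8 * |q - q'| := by
    have : |w - w'| ^ 3 = |w - w'| * (w - w')^2 := by
      rw [sq_abs (w - w') |>.symm]; ring
    rw [this]
    calc |w - w'| * (w - w')^2 ≤ |w - w'| * (4 * ((w^2 + w*w' + w'^2) + p)) :=
          mul_le_mul_of_nonneg_left hd2 (abs_nonneg _)
      _ = 4 * (|w - w'| * ((w^2 + w*w' + w'^2) + p)) := by ring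
      _ = 4 * |q - q'| := by rw [habs]
      _ ≤ 8 * |q - q'| := by nlinarith [abs_nonneg (q - q')]
  have hx : (|w - w'| ^ (3:ℕ)) ^ ((1:ℝ)/3) = |w - w'| := by
    rw [← Real.rpow_natCast |w - w'| 3, ← Real.rpow_mul (abs_nonneg _)]
    norm_num
  calc |w - w'| = (|w - w'| ^ (3:ℕ)) ^ ((1:ℝ)/3) := hx.symm
    _ ≤ (8 * |q - q'|) ^ ((1:ℝ)/3) :=
        Real.rpow_le_rpow (by positivity) h1 (by norm_num)
    _ = 8 ^ ((1:ℝ)/3) * |q - q'| ^ ((1:ℝ)/3) :=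
        Real.mul_rpow (by norm_num) (abs_nonneg _)
    _ = 2 * |q - q'| ^ ((1:ℝ)/3) := by
        congr 1
        rw [show (8:ℝ) = 2 ^ (3:ℕ) by norm_num, ← Real.rpow_natCast 2 3,
          ← Real.rpow_mul (by norm_num : (0:ℝ) ≤ 2)]
        norm_num

lemma estB (w w' q r r' e : ℝ) (hr : 0 ≤ r) (hr' : 0 ≤ r') (he : 0 ≤ e)
    (hrr : (r - r')^2 ≤ 2*(r+r')*e)
    (hw : w ^ 3 + (1+r)*w + q = 0) (hw' : w' ^ 3 + (1+r')*w' + q = 0) :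
    |w - w'| ≤ 2 * Real.sqrt e := by
  set S := w^2 + w*w' + w'^2 with hS_def
  have key1 : (w - w') * (S + 1 + r) = (r' - r) * w' := by
    rw [hS_def]; linear_combination hw - hw'
  have key2 : (w - w') * (S + 1 + r') = (r' - r) * w := by
    rw [hS_def]; linear_combination hw - hw'
  have keyP : (w - w')^2 * ((S + 1 + r) * (S + 1 + r')) = (r' - r)^2 * (w * w') := by
    linear_combination ((w - w') * (S + 1 + r')) * key1 + ((r' - r) * w') * key2
  have hS0 : 0 ≤ S := by rw [hS_def]; nlinarith [sq_nonneg (w+w'), sq_nonneg w, sq_nonneg w']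
  have hSt : w * w' ≤ S := by rw [hS_def]; nlinarith [sq_nonneg w, sq_nonneg w']
  have hB1 : 1 ≤ (S + 1 + r) * (S + 1 + r') := by nlinarith [mul_nonneg hS0 hr', mul_nonneg hS0 hr, mul_nonneg hr hr', sq_nonneg S]
  have hBt : (r + r') * (w * w') ≤ (S + 1 + r) * (S + 1 + r') := by
    have e1 : 0 ≤ (S - w * w') * (r + r') :=
      mul_nonneg (sub_nonneg.2 hSt) (add_nonneg hr hr')
    nlinarith [e1, sq_nonneg S, mul_nonneg hr hr']
  have hD : (w - w')^2 ≤ 4 * e := by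
    rcases le_or_gt (w * w') 0 with ht | ht
    · have h1 : (r' - r)^2 * (w * w') ≤ 0 := mul_nonpos_of_nonneg_of_nonpos (sq_nonneg _) ht
      nlinarith [sq_nonneg (w - w'), keyP, hB1, he]
    · have h1 : (r' - r)^2 * (w * w') ≤ 2*(r+r')*e * (w * w') := by
        have : (r' - r)^2 ≤ 2*(r+r')*e := by rw [show (r'-r)^2 = (r-r')^2 by ring]; exact hrr
        exact mul_le_mul_of_nonneg_right this ht.le
      have h2 : 2*(r+r')*e * (w * w') ≤ 2 * e * ((S + 1 + r) * (S + 1 + r')) := by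
        have := mul_le_mul_of_nonneg_left hBt (by linarith : (0:ℝ) ≤ 2 * e)
        linarith [this]
      have hBpos : (0:ℝ) < (S + 1 + r) * (S + 1 + r') := lt_of_lt_of_le one_pos hB1
      have h3 : (w - w')^2 * ((S + 1 + r) * (S + 1 + r')) ≤
          (2 * e) * ((S + 1 + r) * (S + 1 + r')) := by
        rw [keyP]; linarith [h1, h2]
      have h4 : (w - w')^2 ≤ 2 * e := le_of_mul_le_mul_right h3 hBpos
      linarith
  have : |w - w'| = Real.sqrt ((w - w')^2) := (Real.sqrt_sq_eq_abs _).symm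
  rw [this]
  calc Real.sqrt ((w - w')^2) ≤ Real.sqrt (4 * e) := Real.sqrt_le_sqrt hD
    _ = 2 * Real.sqrt e := by
        rw [show (4:ℝ) * e = (2*Real.sqrt e)^2 by rw [mul_pow, Real.sq_sqrt he]; ring]
        exact Real.sqrt_sq (by positivity)

/-- Hölder `1/3` cusp regularity of the blow-up profile `W̄`: there is `C > 0` with
`|W̄(y) − W̄(y′)| ≤ C(|y₁ − y₁′|^{1/3} + |y̌ − y̌′|)` for all `y, y′ ∈ ℝ³`; in particular
`W̄` is uniformly `C^{1/3}` in `y₁` and uniformly Lipschitz in the transverse variables. -/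
theorem Wbar_holder_one_third :
    ∃ C : ℝ, 0 < C ∧ ∀ y y' : V3,
      |Wbar y - Wbar y'| ≤
        C * (|y 0 - y' 0| ^ ((1 : ℝ) / 3)
          + Real.sqrt ((y 1 - y' 1) ^ 2 + (y 2 - y' 2) ^ 2)) := by
  refine ⟨2, by norm_num, fun y y' => ?_⟩
  set ym : V3 := ![y' 0, y 1, y 2] with hym_def
  have hym0 : ym 0 = y' 0 := rfl
  have hym1 : ym 1 = y 1 := rfl
  have hym2 : ym 2 = y 2 := rfl
  have h1 : |Wbar y - Wbar ym| ≤ 2 * |y 0 - y' 0| ^ ((1:ℝ)/3) := by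
    refine estA _ _ (1 + y 1 ^ 2 + y 2 ^ 2) (y 0) (y' 0) (by positivity) ?_ ?_
    · linear_combination Wbar_cubic y
    · have h := Wbar_cubic ym
      rw [hym0, hym1, hym2] at h
      linear_combination h
  have h2 : |Wbar ym - Wbar y'| ≤ 2 * Real.sqrt ((y 1 - y' 1) ^ 2 + (y 2 - y' 2) ^ 2) := by
    refine estB _ _ (y' 0) (y 1 ^ 2 + y 2 ^ 2) (y' 1 ^ 2 + y' 2 ^ 2) _
      (by positivity) (by positivity) (by positivity) ?_ ?_ ?_
    · nlinarith [sq_nonneg ((y 1 + y' 1) * (y 2 - y' 2) - (y 2 + y' 2) * (y 1 - y' 1)),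
        sq_nonneg (y 1 - y' 1), sq_nonneg (y 2 - y' 2), sq_nonneg (y 1 + y' 1),
        sq_nonneg (y 2 + y' 2)]
    · have h := Wbar_cubic ym
      rw [hym0, hym1, hym2] at h
      linear_combination h
    · linear_combination Wbar_cubic y'
  calc |Wbar y - Wbar y'| ≤ |Wbar y - Wbar ym| + |Wbar ym - Wbar y'| := abs_sub_le _ _ _
    _ ≤ 2 * |y 0 - y' 0| ^ ((1:ℝ)/3)
        + 2 * Real.sqrt ((y 1 - y' 1) ^ 2 + (y 2 - y' 2) ^ 2) := add_le_add h1 h2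
    _ = 2 * (|y 0 - y' 0| ^ ((1 : ℝ) / 3)
        + Real.sqrt ((y 1 - y' 1) ^ 2 + (y 2 - y' 2) ^ 2)) := by ring
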